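/- Let B ⊆ S^n satisfy condition (B): for all distinct A, B ∈ B, J_0(B) ⊆ J_+(A). Let L be any n×n' real matrix and B' = {LᵀBL : B ∈ B} ⊆ S^{n'}. Then B' also satisfies condition (B): for all distinct A', B' ∈ B' arising as LᵀAL and LᵀBL with A ≠ B in B, J_0(LᵀBL) ⊆ J_+(LᵀAL) in S^{n'}_+. -/
import Mathlib

open Matrix

/-- J_+(C) = {Y PSD : ⟨C,Y⟩ ≥ 0}. -/
def Jp {m : ℕ} (C : Matrix (Fin m) (Fin m) ℝ) : Set (Matrix (Fin m) (Fin m) ℝ) :=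
  {Y | Y.PosSemidef ∧ 0 ≤ (C * Y).trace}

/-- J_0(C) = {Y PSD : ⟨C,Y⟩ = 0}. -/
def J0 {m : ℕ} (C : Matrix (Fin m) (Fin m) ℝ) : Set (Matrix (Fin m) (Fin m) ℝ) :=
  {Y | Y.PosSemidef ∧ (C * Y).trace = 0}

theorem stmt11 {n n' : ℕ} (𝓑 : Set (Matrix (Fin n) (Fin n) ℝ))
    (hcondB : ∀ A ∈ 𝓑, ∀ B ∈ 𝓑, A ≠ B → J0 B ⊆ Jp A)
    (L : Matrix (Fin n) (Fin n') ℝ) :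
    ∀ A ∈ 𝓑, ∀ B ∈ 𝓑, A ≠ B → J0 (Lᵀ * B * L) ⊆ Jp (Lᵀ * A * L) := by
  intro A hA B hB hne Y hY
  obtain ⟨hYpsd, htr⟩ := hY
  have hLY : (L * Y * Lᵀ).PosSemidef := by
    have := hYpsd.mul_mul_conjTranspose_same L
    simpa using this
  have key : ∀ C : Matrix (Fin n) (Fin n) ℝ,
      (Lᵀ * C * L * Y).trace = (C * (L * Y * Lᵀ)).trace := by
    intro C
    rw [Matrix.mul_assoc, Matrix.trace_mul_comm, ← Matrix.mul_assoc, ← Matrix.mul_assoc,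
      Matrix.trace_mul_comm, ← Matrix.mul_assoc]
  have hmem : L * Y * Lᵀ ∈ J0 B := ⟨hLY, by rw [← key]; exact htr⟩
  have := hcondB A hA B hB hne hmem
  exact ⟨hYpsd, by rw [key]; exact this.2⟩
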